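/- Let (Ω, F, P) be a probability space with a measure-preserving map τ, and let E be a τ-invariant event. Suppose that for every ε > 0 there exist an event E' and constants C(E'), such that P(E Δ E') < ε and |P(E' ∩ τ^h E') − P(E')²| ≤ C(E')/h² for all h ≥ 1. Then P(E) ∈ {0, 1}. -/

import Mathlib

open MeasureTheory Filter
open scoped symmDiff

/-!
Let `p = μ E`. For an approximating event `E'` with `d = μ (E ∆ E')`, invariance of `E` gives
`μ (E ∩ τ^{-h} E) = p`, while `μ (E' ∩ τ^{-h} E')` differs from it by at most `2 d` because `τ^h`
preserves `μ`. Letting `h → ∞` in the decay bound turns this into `|p - (μ E')²| ≤ 2 d`, and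
`|(μ E')² - p²| ≤ 2 d` as well, so `|p - p²| ≤ 4 d`. Since `d` can be made arbitrarily small,
`p = p²`.
-/

lemma Set.inter_symmDiff_inter_subset {α : Type*} (s t u v : Set α) :
    (s ∩ t) ∆ (u ∩ v) ⊆ s ∆ u ∪ t ∆ v := by
  grind

lemma le_of_forall_le_add_div_sq {a b C : ℝ} (h : ∀ n : ℕ, 1 ≤ n → a ≤ b + C / n ^ 2) :
    a ≤ b := by
  have hlim : Tendsto (fun n : ℕ => b + C / (n : ℝ) ^ 2) atTop (nhds b) := by
    simpa using tendsto_const_nhds.add <| tendsto_const_nhds.div_atTop <|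
      (tendsto_pow_atTop two_ne_zero).comp (tendsto_natCast_atTop_atTop (R := ℝ))
  exact ge_of_tendsto hlim (eventually_atTop.2 ⟨1, h⟩)

namespace MeasureTheory

variable {α : Type*} [MeasurableSpace α] {μ : Measure α} {s t : Set α}

lemma abs_measureReal_sq_sub_sq_le [IsZeroOrProbabilityMeasure μ]
    (hs : MeasurableSet s) (ht : MeasurableSet t) :
    |μ.real s ^ 2 - μ.real t ^ 2| ≤ 2 * μ.real (s ∆ t) := by
  have hsum : |μ.real s + μ.real t| ≤ 2 := by
    rw [abs_of_nonneg (by positivity)]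
    linarith [measureReal_le_one (μ := μ) (s := s), measureReal_le_one (μ := μ) (s := t)]
  calc |μ.real s ^ 2 - μ.real t ^ 2| = |μ.real s - μ.real t| * |μ.real s + μ.real t| := by
        rw [← abs_mul]; ring_nf
    _ ≤ μ.real (s ∆ t) * 2 :=
        mul_le_mul (abs_measureReal_sub_le_measureReal_symmDiff hs.nullMeasurableSet
          ht.nullMeasurableSet) hsum (abs_nonneg _) measureReal_nonneg
    _ = 2 * μ.real (s ∆ t) := mul_comm _ _

lemma MeasurePreserving.abs_measureReal_sub_inter_preimage_le [IsFiniteMeasure μ]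
    {f : α → α} (hf : MeasurePreserving f μ μ) (hs : MeasurableSet s) (hinv : f ⁻¹' s = s)
    (ht : MeasurableSet t) :
    |μ.real s - μ.real (t ∩ f ⁻¹' t)| ≤ 2 * μ.real (s ∆ t) := by
  have hst : NullMeasurableSet (s ∆ t) μ := (hs.symmDiff ht).nullMeasurableSet
  calc |μ.real s - μ.real (t ∩ f ⁻¹' t)|
      = |μ.real (s ∩ f ⁻¹' s) - μ.real (t ∩ f ⁻¹' t)| := by rw [hinv, Set.inter_self]
    _ ≤ μ.real ((s ∩ f ⁻¹' s) ∆ (t ∩ f ⁻¹' t)) :=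
        abs_measureReal_sub_le_measureReal_symmDiff
          (by rw [hinv, Set.inter_self]; exact hs.nullMeasurableSet)
          (ht.inter (hf.measurable ht)).nullMeasurableSet
    _ ≤ μ.real (s ∆ t ∪ f ⁻¹' (s ∆ t)) := by
        rw [Set.preimage_symmDiff]
        exact measureReal_mono (Set.inter_symmDiff_inter_subset _ _ _ _)
    _ ≤ μ.real (s ∆ t) + μ.real (f ⁻¹' (s ∆ t)) := measureReal_union_le _ _
    _ = 2 * μ.real (s ∆ t) := by rw [hf.measureReal_preimage hst]; ring

lemma MeasurePreserving.abs_measureReal_sub_sq_le_of_correlation_decay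
    [IsProbabilityMeasure μ]
    {τ : α → α} (hτ : MeasurePreserving τ μ μ) (hs : MeasurableSet s) (hinv : τ ⁻¹' s = s)
    (ht : MeasurableSet t) {C : ℝ}
    (hC : ∀ n : ℕ, 1 ≤ n → |μ.real (t ∩ τ^[n] ⁻¹' t) - μ.real t ^ 2| ≤ C / n ^ 2) :
    |μ.real s - μ.real s ^ 2| ≤ 4 * μ.real (s ∆ t) := by
  refine le_of_forall_le_add_div_sq (C := C) fun n hn => ?_
  have hclose := (hτ.iterate n).abs_measureReal_sub_inter_preimage_le hs
    (Function.IsFixedPt.preimage_iterate hinv n) ht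
  have hsq := abs_measureReal_sq_sub_sq_le (μ := μ) ht hs
  rw [symmDiff_comm] at hsq
  linarith [hC n hn, abs_sub_le (μ.real s) (μ.real t ^ 2) (μ.real s ^ 2),
    abs_sub_le (μ.real s) (μ.real (t ∩ τ^[n] ⁻¹' t)) (μ.real t ^ 2)]

lemma measure_eq_zero_or_one_of_measureReal_eq_sq [IsFiniteMeasure μ]
    (h : μ.real s ^ 2 = μ.real s) : μ s = 0 ∨ μ s = 1 := by
  rcases eq_zero_or_one_of_sq_eq_self h with h0 | h1
  · exact Or.inl ((measureReal_eq_zero_iff).1 h0)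
  · exact Or.inr ((ENNReal.toReal_eq_one_iff _).1 h1)

end MeasureTheory

/-- Abstract ergodicity criterion: if an invariant event `E` can be approximated
arbitrarily well by events `E'` whose correlations with their distant iterated
translates decay quadratically, then `P(E) ∈ {0, 1}`. -/
theorem invariant_event_zero_one {Ω : Type*} [MeasurableSpace Ω]
    (μ : Measure Ω) [IsProbabilityMeasure μ] (τ : Ω → Ω)
    (hτ : MeasurePreserving τ μ μ)
    (E : Set Ω) (hE : MeasurableSet E) (hinv : τ ⁻¹' E = E)
    (happrox : ∀ ε > 0, ∃ E' : Set Ω, MeasurableSet E' ∧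
      μ (symmDiff E E') < ENNReal.ofReal ε ∧
      ∃ C : ℝ, ∀ h : ℕ, 1 ≤ h →
        |(μ (E' ∩ (τ^[h]) ⁻¹' E')).toReal - ((μ E').toReal) ^ 2| ≤ C / h ^ 2) :
    μ E = 0 ∨ μ E = 1 := by
  refine measure_eq_zero_or_one_of_measureReal_eq_sq (eq_of_forall_dist_le fun ε hε => ?_).symm
  obtain ⟨E', hE', hsmall, C, hC⟩ := happrox (ε / 4) (by positivity)
  have hd : μ.real (E ∆ E') ≤ ε / 4 := ENNReal.toReal_le_of_le_ofReal (by positivity) hsmall.le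
  calc dist (μ.real E) (μ.real E ^ 2) = |μ.real E - μ.real E ^ 2| := Real.dist_eq _ _
    _ ≤ 4 * μ.real (E ∆ E') := hτ.abs_measureReal_sub_sq_le_of_correlation_decay hE hinv hE' hC
    _ ≤ ε := by linarith
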